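/- arXiv:1510.00990 — 4 statements merged into one kernel-verified Lean document; each statement's English description precedes it below -/
import Mathlib

section
/- Consider the set T of functions f : ℕ → ℕ with finite range. For each pair (g, s) where g : ℕ → ℕ is unbounded, g is non-decreasing on [s, ∞), and g(s) ≥ max{g(i) : i < s}, define the basic set B(g,s) = {f ∈ T : (∀ n < s, f(n) = g(n)) ∧ (∀ n ≥ s, f(n) ≤ g(n))}. Then the intersection of two such basic sets B(g,s) and B(g',s') is either empty or again a basic set of this form; hence these sets form a basis for a topology on T. -/
/-- `g` is unbounded. -/
def Unbdd (g : ℕ → ℕ) : Prop := ∀ N, ∃ n, g n > N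

/-- `(g, s)` determines a basic open set: `g` is unbounded, non-decreasing on `[s, ∞)`,
and `g s` dominates the values of `g` below `s`. -/
def Stem (g : ℕ → ℕ) (s : ℕ) : Prop :=
  Unbdd g ∧ (∀ m n, s ≤ m → m ≤ n → g m ≤ g n) ∧ ∀ i < s, g i ≤ g s

/-- The basic set `B(g,s)` inside the space of finite-range functions `ℕ → ℕ`. -/
def Bas (g : ℕ → ℕ) (s : ℕ) : Set (ℕ → ℕ) :=
  {f | (Set.range f).Finite ∧ (∀ n < s, f n = g n) ∧ ∀ n, s ≤ n → f n ≤ g n}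

private lemma tail_big {g : ℕ → ℕ} {s : ℕ} (hg : Stem g s) (N : ℕ) :
    ∀ n, s ≤ n → (∃ m, g m > N) → ∃ k, s ≤ k ∧ ∀ j, k ≤ j → g j > N := by
  intro n _ ⟨m, hm⟩
  refine ⟨max m s, le_max_right _ _, fun j hj => ?_⟩
  rcases lt_or_ge m s with h | h
  · have h1 : g m ≤ g s := hg.2.2 m h
    have h2 : g s ≤ g j := hg.2.1 s j le_rfl (le_trans (le_max_right m s) hj)
    omega
  · have := hg.2.1 m j h (le_trans (le_max_left m s) hj)
    omega

private lemma aux (g g' : ℕ → ℕ) (s s' : ℕ)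
    (hg : Stem g s) (hg' : Stem g' s') (hle : s ≤ s') :
    Bas g s ∩ Bas g' s' = ∅ ∨
      ∃ h t, Stem h t ∧ Bas g s ∩ Bas g' s' = Bas h t := by
  rcases Set.eq_empty_or_nonempty (Bas g s ∩ Bas g' s') with he | ⟨f₀, hf₀g, hf₀g'⟩
  · exact Or.inl he
  right
  have key1 : ∀ n < s, g n = g' n := fun n hn =>
    (hf₀g.2.1 n hn).symm.trans (hf₀g'.2.1 n (lt_of_lt_of_le hn hle))
  have key2 : ∀ n, s ≤ n → n < s' → g' n ≤ g n := fun n hn hn' =>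
    (hf₀g'.2.1 n hn').symm ▸ hf₀g.2.2 n hn
  set h : ℕ → ℕ := fun n => if n < s' then g' n else min (g n) (g' n) with hh
  have hlt : ∀ n, n < s' → h n = g' n := fun n hn => if_pos hn
  have hge : ∀ n, s' ≤ n → h n = min (g n) (g' n) := fun n hn => if_neg (by omega)
  refine ⟨h, s', ⟨?_, ?_, ?_⟩, ?_⟩
  · -- unbounded
    intro N
    obtain ⟨k₁, hk₁s, hk₁⟩ := tail_big hg N s le_rfl (hg.1 N)
    obtain ⟨k₂, hk₂s, hk₂⟩ := tail_big hg' N s' le_rfl (hg'.1 N)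
    set n := max (max k₁ k₂) s' with hn
    have hns' : s' ≤ n := le_max_right _ _
    refine ⟨n, ?_⟩
    rw [hge n hns']
    have h1 := hk₁ n (le_trans (le_max_left k₁ k₂) (le_max_left _ _))
    have h2 := hk₂ n (le_trans (le_max_right k₁ k₂) (le_max_left _ _))
    omega
  · -- monotone on [s', ∞)
    intro m n hm hmn
    rw [hge m hm, hge n (le_trans hm hmn)]
    exact min_le_min (hg.2.1 m n (le_trans hle hm) hmn)
      (hg'.2.1 m n hm hmn)
  · -- values below s' dominated by h s'
    intro i hi
    rw [hlt i hi, hge s' le_rfl]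
    refine le_min ?_ (hg'.2.2 i hi)
    rcases lt_or_ge i s with his | his
    · have h1 : g' i = g i := (key1 i his).symm
      have h2 : g i ≤ g s := hg.2.2 i his
      have h3 : g s ≤ g s' := hg.2.1 s s' le_rfl hle
      omega
    · have h1 := key2 i his hi
      have h2 := hg.2.1 i s' his (le_of_lt hi)
      omega
  · -- set equality
    ext f
    constructor
    · rintro ⟨⟨hfin, hfa, hfb⟩, ⟨_, hfa', hfb'⟩⟩
      refine ⟨hfin, fun n hn => ?_, fun n hn => ?_⟩
      · rw [hlt n hn]; exact hfa' n hn
      · rw [hge n hn]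
        exact le_min (hfb n (le_trans hle hn)) (hfb' n hn)
    · rintro ⟨hfin, hfa, hfb⟩
      refine ⟨⟨hfin, fun n hn => ?_, fun n hn => ?_⟩,
        hfin, fun n hn => ?_, fun n hn => ?_⟩
      · have := hfa n (lt_of_lt_of_le hn hle)
        rw [hlt n (lt_of_lt_of_le hn hle)] at this
        rw [this]; exact (key1 n hn).symm
      · rcases lt_or_ge n s' with hns' | hns'
        · have := hfa n hns'
          rw [hlt n hns'] at this
          rw [this]; exact key2 n hn hns'
        · have := hfb n hns'
          rw [hge n hns'] at this
          omega
      · rw [← hlt n hn]; exact hfa n hn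
      · have := hfb n hn
        rw [hge n hn] at this
        omega

/-- The basic sets `B(g,s)` are closed under pairwise intersection, up to ∅:
hence they form a basis for a topology on the finite-range functions. -/
theorem basic_sets_form_basis (g g' : ℕ → ℕ) (s s' : ℕ)
    (hg : Stem g s) (hg' : Stem g' s') :
    Bas g s ∩ Bas g' s' = ∅ ∨
      ∃ h t, Stem h t ∧ Bas g s ∩ Bas g' s' = Bas h t := by
  rcases le_total s s' with hle | hle
  · exact aux g g' s s' hg hg' hle
  · rw [Set.inter_comm]
    exact aux g' g s' s hg' hg hle
end

section
/- With basic sets O(P,N) on the unbounded subsets of ℕ: if P' is a finite superset of P, then O(P',N) meets every nonempty basic open subset of O(P,N). That is, for every nonempty O(P_V, N_V) ⊆ O(P,N), the intersection O(P',N) ∩ O(P_V,N_V) is nonempty. -/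
/-- A set of naturals is unbounded. -/
def UnbddSet (X : Set ℕ) : Prop := ∀ n, ∃ m ∈ X, m > n

/-- Basic set `O(P,N)` in the space of unbounded subsets of `ℕ`:
unbounded sets containing `P` with finite intersection with `N`. -/
def OSet (P N : Set ℕ) : Set (Set ℕ) :=
  {X | UnbddSet X ∧ P ⊆ X ∧ (X ∩ N).Finite}

lemma unbdd_infinite {X : Set ℕ} (h : UnbddSet X) : X.Infinite := by
  intro hfin
  obtain ⟨b, hb⟩ := hfin.bddAbove
  obtain ⟨m, hm, hmb⟩ := h b
  exact absurd (hb hm) (by omega)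

lemma infinite_unbdd {X : Set ℕ} (h : X.Infinite) : UnbddSet X := by
  intro n
  obtain ⟨m, hm, hmn⟩ := h.exists_gt n
  exact ⟨m, hm, hmn⟩

/-- If `P'` is a finite superset of `P`, then `O(P',N)` meets every nonempty basic
open subset of `O(P,N)`. -/
theorem OSet_extend_positive_compatible (P P' N : Set ℕ)
    (hP : P.Finite) (hP' : P'.Finite) (hPP' : P ⊆ P')
    (PV NV : Set ℕ) (hPV : PV.Finite)
    (hne : (OSet PV NV).Nonempty) (hsub : OSet PV NV ⊆ OSet P N) :
    (OSet P' N ∩ OSet PV NV).Nonempty := by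
  obtain ⟨X₀, hX₀u, hX₀P, hX₀N⟩ := hne
  -- NVᶜ is infinite
  have hNVc : NVᶜ.Infinite := by
    intro hfin
    have : X₀.Finite := by
      have hsub' : X₀ ⊆ (X₀ ∩ NV) ∪ NVᶜ := by
        intro x hx
        by_cases hxNV : x ∈ NV
        · exact Or.inl ⟨hx, hxNV⟩
        · exact Or.inr hxNV
      exact Set.Finite.subset (hX₀N.union hfin) hsub'
    exact unbdd_infinite hX₀u this
  -- N \ NV is finite
  have hNNV : (N \ NV).Finite := by
    by_contra hinf
    replace hinf : (N \ NV).Infinite := hinf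
    have hY : (X₀ ∪ (N \ NV)) ∈ OSet PV NV := by
      refine ⟨infinite_unbdd ((unbdd_infinite hX₀u).mono Set.subset_union_left),
        hX₀P.trans Set.subset_union_left, ?_⟩
      have : (X₀ ∪ (N \ NV)) ∩ NV ⊆ X₀ ∩ NV := by
        rintro x ⟨hx | ⟨_, hxn⟩, hxNV⟩
        · exact ⟨hx, hxNV⟩
        · exact absurd hxNV hxn
      exact hX₀N.subset this
    have := (hsub hY).2.2
    exact hinf (this.subset (fun x hx => ⟨Or.inr hx, hx.1⟩))
  -- witness
  refine ⟨P' ∪ PV ∪ NVᶜ, ?_, ?_⟩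
  · refine ⟨infinite_unbdd (hNVc.mono (Set.subset_union_right)),
      fun x hx => Or.inl (Or.inl hx), ?_⟩
    have hs : (P' ∪ PV ∪ NVᶜ) ∩ N ⊆ P' ∪ PV ∪ (N \ NV) := by
      rintro x ⟨hx | hx, hxN⟩
      · exact Or.inl hx
      · exact Or.inr ⟨hxN, hx⟩
    exact ((hP'.union hPV).union hNNV).subset hs
  · refine ⟨infinite_unbdd (hNVc.mono (Set.subset_union_right)),
      fun x hx => Or.inl (Or.inr hx), ?_⟩
    have hs : (P' ∪ PV ∪ NVᶜ) ∩ NV ⊆ P' ∪ PV := by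
      rintro x ⟨hx | hx, hxNV⟩
      · exact hx
      · exact absurd hxNV hx
    exact (hP'.union hPV).subset hs
end

section
/- Every total computable function ℕ → ℕ extensional on indices of total computable functions induces a continuous map: if z is an index such that {z}(y) halts for every y with {y} total, and {z}(y) = {z}(y') whenever {y} and {y'} are total and pointwise equal, then for every y with {y} total there is m such that for all y' with {y'} total, if {y'} agrees with {y} on inputs < m then {z}(y') = {z}(y). (KLST/Kreisel–Lacombe–Shoenfield theorem.) -/
/-!
Fix a total `y` with `z(y) = w`. By the recursion theorem there is an index `e` that copies a total
`d` while it simulates `z` on `e` itself, and once that simulation halts at stage `s` with value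
`v`, copies a code chosen computably from `(s, v)`. Since `z` is defined and extensional on
total codes, `z(e)` halts (otherwise `e` computes `d`), and `v` is then the value of `z` on every
total chosen code agreeing with `d` below `s`.

First take `d = y` and, if `v = w`, search for a finite variant of `y` beyond `s` on which `z`
differs from `w` (and copy `y` otherwise). Either choice contradicts the previous paragraph unless
no such variant exists, so some `t` is a modulus of continuity at `y` for finite variants of `y`.
Then, for total `y'` agreeing with `y` below `t`, take `d = y'` and choose `y'` if `v = w`, and
otherwise `y'` below `max s t` followed by `y`. The latter is a finite variant of `y`, so its value
is `w`, forcing `v = w`; hence `z(y') = w`.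
-/

open Nat.Partrec

/-- An index `c` computes a total function. -/
def TotalCode (c : Nat.Partrec.Code) : Prop := ∀ n, (c.eval n).Dom

open Encodable Denumerable

namespace Nat.Partrec.Code

theorem exists_primrec_eval_eq {α : Type*} [Primcodable α] {g : α → ℕ →. ℕ}
    (hg : Partrec₂ g) : ∃ c : α → Code, Primrec c ∧ ∀ a x, (c a).eval x = g a x := by
  have hn : Partrec fun n : ℕ =>
      (decode (α := α) n.unpair.1 : Part α).bind fun a => g a n.unpair.2 :=
    ((Computable.decode.comp (Computable.fst.comp Computable.unpair)).ofOption).bind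
      (hg.comp Computable.snd (Computable.snd.comp (Computable.unpair.comp Computable.fst)))
  obtain ⟨c₀, hc₀⟩ := exists_code.1 (Partrec.nat_iff.1 hn)
  refine ⟨fun a => c₀.curry (encode a),
    primrec₂_curry.comp (_root_.Primrec.const c₀) Primrec.encode, fun a x => ?_⟩
  simp [eval_curry, hc₀, encodek]

theorem exists_primrec_patch (y : Code) :
    ∃ patch : ℕ → List ℕ → Code, Primrec₂ patch ∧ ∀ t σ x, (patch t σ).eval x =
      if t ≤ x ∧ x < σ.length then Part.some (σ.getD x 0) else y.eval x := by
  have hg : Partrec₂ fun (q : ℕ × List ℕ) x =>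
      if q.1 ≤ x ∧ x < q.2.length then Part.some (q.2.getD x 0) else y.eval x := by
    refine (Partrec.cond ((PrimrecPred.and
      (Primrec.nat_le.comp (Primrec.fst.comp Primrec.fst) Primrec.snd)
      (Primrec.nat_lt.comp Primrec.snd (Primrec.list_length.comp (Primrec.snd.comp Primrec.fst)))
      ).decide.to_comp)
      ((Primrec.list_getD 0).comp (Primrec.snd.comp Primrec.fst) Primrec.snd).to_comp.partrec
      (eval_part.comp (Computable.const y) Computable.snd)).to₂.of_eq fun q => ?_
    simp
  obtain ⟨c, hc, hc_eval⟩ := exists_primrec_eval_eq hg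
  exact ⟨fun t σ => c (t, σ), hc, fun t σ => hc_eval (t, σ)⟩

theorem evaln_eq_none_of_not_dom {c : Code} {n : ℕ} (h : ¬(c.eval n).Dom) (k : ℕ) :
    evaln k c n = Option.none :=
  Option.eq_none_iff_forall_ne_some.2 fun v hv =>
    h (Part.dom_iff_mem.2 ⟨v, evaln_sound (Option.mem_def.2 hv)⟩)

theorem exists_mem_rfind_evaln_isSome {c : Code} {n v : ℕ} (hv : v ∈ c.eval n) :
    ∃ s ∈ Nat.rfind (fun k => Part.some (evaln k c n).isSome),
      ∀ k, evaln k c n = if s ≤ k then some v else Option.none := by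
  obtain ⟨k₀, hk₀⟩ := evaln_complete.1 hv
  obtain ⟨s, hs, -⟩ := Nat.rfind_min' (p := fun k => (evaln k c n).isSome)
    (m := k₀) (Option.isSome_iff_exists.2 ⟨v, hk₀⟩)
  refine ⟨s, hs, fun k => ?_⟩
  split_ifs with hsk
  · obtain ⟨u, hu⟩ := Option.isSome_iff_exists.1 (by simpa using Nat.rfind_spec hs)
    rw [evaln_mono hsk hu, Part.mem_unique hv (evaln_sound hu)]
  · simpa using Nat.rfind_min hs (not_le.1 hsk)

theorem exists_code_switch_on_halt (z d : Code) {f : ℕ → ℕ →. Code} (hf : Partrec₂ f) :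
    ∃ e : Code, (¬(z.eval (encode e)).Dom → e.eval = d.eval) ∧
      ∀ v ∈ z.eval (encode e), ∃ s, ∀ x,
        e.eval x = if x < s then d.eval x else (f s v).bind fun c => c.eval x := by
  let halted : Code → ℕ → Bool := fun c k => (evaln k z (encode c)).isSome
  let Φ : Code → ℕ →. ℕ := fun c x =>
    cond (halted c x)
      ((Nat.rfind fun k => Part.some (halted c k)).bind fun s =>
        (f s ((evaln s z (encode c)).getD 0)).bind fun c' => c'.eval x)
      (d.eval x)
  have hevaln : Primrec fun p : Code × ℕ => evaln p.2 z (encode p.1) :=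
    primrec_evaln.comp ((Primrec.snd.pair (_root_.Primrec.const z)).pair
      (Primrec.encode.comp Primrec.fst))
  have hhalted : Primrec₂ halted := (Primrec.option_isSome.comp hevaln).to₂
  have hΦ : Partrec₂ Φ := by
    refine Partrec.cond hhalted.to_comp ?_ (eval_part.comp (Computable.const d) Computable.snd)
    have hswitch : Partrec fun q : (Code × ℕ) × ℕ =>
        (f q.2 ((evaln q.2 z (encode q.1.1)).getD 0)).bind fun c' => c'.eval q.1.2 :=
      (hf.comp Computable.snd ((Primrec.option_getD.comp (hevaln.comp
        ((Primrec.fst.comp Primrec.fst).pair Primrec.snd))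
        (_root_.Primrec.const 0)).to_comp)).bind
        (eval_part.comp Computable.snd (Computable.snd.comp (Computable.fst.comp Computable.fst)))
    exact (_root_.Partrec.rfind (hhalted.to_comp.comp (Computable.fst.comp Computable.fst)
      Computable.snd).to₂.partrec₂).bind hswitch.to₂
  obtain ⟨e, he⟩ := fixed_point₂ hΦ
  refine ⟨e, fun hdiv => ?_, fun v hv => ?_⟩
  · ext1 x
    simp [he, Φ, halted, evaln_eq_none_of_not_dom hdiv]
  · obtain ⟨s, hs, hstage⟩ := exists_mem_rfind_evaln_isSome hv
    refine ⟨s, fun x => ?_⟩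
    rw [he]
    by_cases hx : x < s
    · simp [Φ, halted, hstage, hx, not_le.2 hx]
    · simp only [Φ, halted]
      rw [Part.eq_some_iff.2 hs]
      simp [hstage, hx, not_lt.1 hx]

theorem exists_partrec_find_ne (z : Code) (w : ℕ) {α β : Type*} [Primcodable α]
    [Denumerable β] {p : α → β → ℕ} (hp : Primrec₂ p) :
    ∃ F : α →. β, Partrec F ∧ (∀ a, ∀ b ∈ F a, ∃ u ∈ z.eval (p a b), u ≠ w) ∧
      ∀ a b, ∀ u ∈ z.eval (p a b), u ≠ w → (F a).Dom := by
  let attempt : α → ℕ → Option β := fun a n =>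
    (evaln n.unpair.2 z (p a (ofNat β n.unpair.1))).bind fun u =>
      if u = w then Option.none else some (ofNat β n.unpair.1)
  have hb : Primrec fun q : α × ℕ => ofNat β q.2.unpair.1 :=
    (Primrec.ofNat β).comp (Primrec.fst.comp (Primrec.unpair.comp Primrec.snd))
  have hattempt : Primrec₂ attempt := by
    refine Primrec.option_bind (primrec_evaln.comp (((Primrec.snd.comp
      (Primrec.unpair.comp Primrec.snd)).pair (_root_.Primrec.const z)).pair
        (hp.comp Primrec.fst hb))) ?_
    exact (Primrec.ite (Primrec.eq.comp Primrec.snd (_root_.Primrec.const w))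
      (_root_.Primrec.const Option.none) (Primrec.option_some.comp (hb.comp Primrec.fst))).to₂
  refine ⟨fun a => Nat.rfindOpt (attempt a), _root_.Partrec.rfindOpt hattempt.to_comp,
    fun a b hb => ?_, fun a b u hu huw => Nat.rfindOpt_dom.2 ?_⟩
  · obtain ⟨n, hn⟩ := Nat.rfindOpt_spec hb
    obtain ⟨u, hu, hub⟩ := Option.mem_bind_iff.1 hn
    by_cases huw : u = w
    · simp [huw] at hub
    · simp only [huw, if_false, Option.mem_def, Option.some_inj] at hub
      exact ⟨u, hub ▸ evaln_sound hu, huw⟩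
  · obtain ⟨k, hk⟩ := evaln_complete.1 hu
    exact ⟨Nat.pair (encode b) k, b, by simp [attempt, Option.mem_def.1 hk, huw]⟩

end Nat.Partrec.Code

theorem TotalCode.congr {c c' : Code} (hc : TotalCode c) (h : c'.eval = c.eval) :
    TotalCode c' :=
  fun n => h ▸ hc n

theorem TotalCode.exists_list_eq_ite {c y : Code} (hc : TotalCode c) {t N : ℕ}
    (hbelow : ∀ x < t, c.eval x = y.eval x) (habove : ∀ x ≥ N, c.eval x = y.eval x) :
    ∃ σ : List ℕ, ∀ x,
      c.eval x = if t ≤ x ∧ x < σ.length then Part.some (σ.getD x 0) else y.eval x := by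
  refine ⟨List.ofFn fun i : Fin N => (c.eval i).get (hc i), fun x => ?_⟩
  split_ifs with hx
  · have hxN : x < N := by simpa using hx.2
    simp [hxN, Part.some_get]
  · rcases not_and_or.1 hx with hx | hx
    · exact hbelow x (not_le.1 hx)
    · exact habove x (by simpa using hx)

structure IsEffectiveOperation (z : Code) : Prop where
  dom : ∀ y, TotalCode y → (z.eval (encode y)).Dom
  ext : ∀ y y', TotalCode y → TotalCode y' → (∀ n, y.eval n = y'.eval n) →
    z.eval (encode y) = z.eval (encode y')

namespace IsEffectiveOperation

variable {z : Code}

theorem exists_forced_value (hz : IsEffectiveOperation z) {d : Code} (hd : TotalCode d)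
    {f : ℕ → ℕ →. Code} (hf : Partrec₂ f) :
    ∃ s v, ∀ c ∈ f s v, TotalCode c → (∀ x < s, c.eval x = d.eval x) →
      v ∈ z.eval (encode c) := by
  obtain ⟨e, hdiv, hconv⟩ := Code.exists_code_switch_on_halt z d hf
  have hdom : (z.eval (encode e)).Dom := by
    by_contra h
    exact h (hz.dom e (hd.congr (hdiv h)))
  obtain ⟨v, hv⟩ := Part.dom_iff_mem.1 hdom
  obtain ⟨s, hs⟩ := hconv v hv
  refine ⟨s, v, fun c hc hc_total hc_below => ?_⟩
  have hec : e.eval = c.eval := funext fun x => by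
    rw [hs]
    split_ifs with hx
    · exact (hc_below x hx).symm
    · rw [Part.eq_some_iff.2 hc, Part.bind_some]
  exact hz.ext e c (hc_total.congr hec) hc_total (congrFun hec) ▸ hv

theorem exists_modulus_on_finite_variants (hz : IsEffectiveOperation z) {y : Code}
    (hy : TotalCode y) :
    ∃ t, ∀ c, TotalCode c → (∀ x < t, c.eval x = y.eval x) →
      (∃ N, ∀ x ≥ N, c.eval x = y.eval x) → z.eval (encode c) = z.eval (encode y) := by
  obtain ⟨w, hw⟩ := Part.dom_iff_mem.1 (hz.dom y hy)
  obtain ⟨patch, hpatch, hpatch_eval⟩ := Code.exists_primrec_patch y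
  have hpatch_total : ∀ t σ, TotalCode (patch t σ) := fun t σ x => by
    rw [hpatch_eval]; split_ifs <;> simp [hy x]
  have hpatch_below : ∀ t σ, ∀ x < t, (patch t σ).eval x = y.eval x := fun t σ x hx => by
    rw [hpatch_eval, if_neg (by omega)]
  obtain ⟨F, hF, hF_mem, hF_dom⟩ :=
    Code.exists_partrec_find_ne z w (Primrec.encode.comp hpatch).to₂
  obtain ⟨s, v, hsv⟩ := hz.exists_forced_value hy
    (f := fun s v => if v = w then (F s).map (patch s) else Part.some y) <| by
    refine (Partrec.cond (Primrec.eq.comp Primrec.snd (Primrec.const w)).decide.to_comp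
      ((hF.comp Computable.fst).map (hpatch.to_comp.comp
        (Computable.fst.comp Computable.fst) Computable.snd).to₂)
      (Computable.const y).partrec).to₂.of_eq fun q => ?_
    simp
  by_contra! hcont
  obtain hvw | rfl := ne_or_eq v w
  · exact hvw (Part.mem_unique (hsv y (by simp [hvw]) hy fun _ _ => rfl) hw)
  obtain ⟨c, hc, hc_below, ⟨N, hc_above⟩, hne⟩ := hcont s
  obtain ⟨σ, hσ⟩ := hc.exists_list_eq_ite hc_below hc_above
  obtain ⟨u, hu⟩ := Part.dom_iff_mem.1 (hz.dom c hc)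
  have huv : u ≠ v := by
    rintro rfl
    exact hne (by rw [Part.eq_some_iff.2 hw, Part.eq_some_iff.2 hu])
  have hu_patch : u ∈ z.eval (encode (patch s σ)) :=
    hz.ext c _ hc (hpatch_total s σ) (fun x => by rw [hσ, hpatch_eval]) ▸ hu
  obtain ⟨σ', hσ'⟩ := Part.dom_iff_mem.1 (hF_dom s σ u hu_patch huv)
  obtain ⟨u', hu', hu'v⟩ := hF_mem s σ' hσ'
  exact hu'v (Part.mem_unique hu' (hsv _ (by simp [Part.mem_map _ hσ'])
    (hpatch_total s σ') (hpatch_below s σ')))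

theorem exists_modulus (hz : IsEffectiveOperation z) {y : Code} (hy : TotalCode y) :
    ∃ m, ∀ y', TotalCode y' → (∀ n < m, y.eval n = y'.eval n) →
      z.eval (encode y') = z.eval (encode y) := by
  obtain ⟨t, ht⟩ := hz.exists_modulus_on_finite_variants hy
  refine ⟨t, fun y' hy' hagree => ?_⟩
  obtain ⟨w, hw⟩ := Part.dom_iff_mem.1 (hz.dom y hy)
  obtain ⟨splice, hsplice, hsplice_eval⟩ := Code.exists_primrec_eval_eq
    (g := fun N x => if x < N then y'.eval x else y.eval x) <| by
    refine (Partrec.cond (Primrec.nat_lt.comp Primrec.snd Primrec.fst).decide.to_comp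
      (Code.eval_part.comp (Computable.const y') Computable.snd)
      (Code.eval_part.comp (Computable.const y) Computable.snd)).to₂.of_eq fun q => ?_
    simp
  obtain ⟨s, v, hsv⟩ := hz.exists_forced_value hy'
    (f := fun s v => Part.some (if v = w then y' else splice (max s t)))
    (Primrec.ite (Primrec.eq.comp Primrec.snd (Primrec.const w)) (Primrec.const y')
      (hsplice.comp (Primrec.nat_max.comp Primrec.fst (Primrec.const t)))).to_comp.partrec.to₂
  have hsplice_total : TotalCode (splice (max s t)) := fun x => by
    rw [hsplice_eval]; split_ifs; exacts [hy' x, hy x]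
  obtain rfl | hvw := eq_or_ne v w
  · rw [Part.eq_some_iff.2 hw, Part.eq_some_iff.2 (hsv y' (by simp) hy' fun _ _ => rfl)]
  · refine absurd (Part.mem_unique ?_ hw) hvw
    rw [← ht _ hsplice_total ?_ ⟨max s t, fun x hx => ?_⟩]
    · exact hsv _ (by simp [hvw]) hsplice_total fun x hx => by
        rw [hsplice_eval, if_pos (by omega)]
    · intro x hx
      rw [hsplice_eval, if_pos (by omega), hagree x hx]
    · rw [hsplice_eval, if_neg (by omega)]

end IsEffectiveOperation

/-- KLST (Kreisel–Lacombe–Shoenfield/Tseitin), continuity part: a computable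
functional defined and extensional on indices of total computable functions is
continuous at every such index. -/
theorem klst (z : Nat.Partrec.Code)
    (htot : ∀ y : Nat.Partrec.Code, TotalCode y →
      (z.eval (Encodable.encode y)).Dom)
    (hext : ∀ y y' : Nat.Partrec.Code, TotalCode y → TotalCode y' →
      (∀ n, y.eval n = y'.eval n) →
      z.eval (Encodable.encode y) = z.eval (Encodable.encode y')) :
    ∀ y : Nat.Partrec.Code, TotalCode y → ∃ m, ∀ y' : Nat.Partrec.Code,
      TotalCode y' → (∀ n < m, y.eval n = y'.eval n) →
      z.eval (Encodable.encode y') = z.eval (Encodable.encode y) :=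
  fun _ hy => IsEffectiveOperation.exists_modulus ⟨htot, hext⟩ hy
end

section
/- Define v(n) = max {k < n : ∀ j, w, z < k, if j codes a proof (in a fixed sound, recursively axiomatized theory) that {w} is total, then {w}(z) halts in fewer than n steps with output less than n} (max of the empty set being 0). Then v : ℕ → ℕ is total computable, and the range of v is unbounded: for every k there exists n with v(n) ≥ k. -/
open Nat.Partrec

/-- `{w}(z)` halts in fewer than `n` steps with output less than `n`
(using `evaln` with fuel `n`; `getD n` is `< n` exactly when the computation
converges within the fuel with output `< n`). -/
def HaltsFastBelow (n w z : ℕ) : Prop :=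
  (Nat.Partrec.Code.evaln n (Denumerable.ofNat Nat.Partrec.Code w) z).getD n < n

instance (n w z : ℕ) : Decidable (HaltsFastBelow n w z) := by
  unfold HaltsFastBelow; infer_instance

/-- Beeson's function `v`, relative to a proof predicate `Pr` (where `Pr j w` says `j`
codes a proof that `{w}` is total):
`v n = max {k < n : ∀ j, w, z < k, Pr j w → {w}(z) halts in < n steps with output < n}`. -/
def beesonV (Pr : ℕ → ℕ → Bool) (n : ℕ) : ℕ :=
  ((Finset.range n).filter fun k =>
    ∀ j < k, ∀ w < k, ∀ z < k, Pr j w = true → HaltsFastBelow n w z).sup id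

/-!
The condition defining `v n` involves only bounded quantifiers, the computable predicate `Pr`
and `n`-step evaluation `evaln n`, so `v` is computable by primitive recursion over `n`.
For unboundedness, fix `k`: soundness makes each of the finitely many computations `{w}(z)`
with `Pr j w`, `j, w, z < k` convergent, hence all of them halt within `n` steps with output
`< n` once `n` is large; for such `n > k`, `k` belongs to the set whose maximum is `v n`.
-/

open Filter

namespace Computable

variable {α : Type*} [Primcodable α] {p : α → ℕ → Prop} [∀ a i, Decidable (p a i)] {f : α → ℕ}

theorem decide_forall_lt (hp : Computable₂ fun a i => decide (p a i)) (hf : Computable f) :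
    Computable fun a => decide (∀ i < f a, p a i) := by
  refine (nat_rec hf (const true)
    (Primrec.and.to_comp.comp (snd.comp snd) (hp.comp fst (fst.comp snd))).to₂).of_eq fun a => ?_
  induction f a with
  | zero => simp
  | succ n ih =>
    simp only at ih
    simp only [ih, Nat.forall_lt_succ_right, Bool.decide_and]

theorem finset_sup_filter_range (hp : Computable₂ fun a i => decide (p a i)) (hf : Computable f) :
    Computable fun a => ((Finset.range (f a)).filter (p a)).sup id := by
  refine (nat_rec hf (const 0)
    (cond (hp.comp fst (fst.comp snd)) (Primrec.nat_max.to_comp.comp (fst.comp snd) (snd.comp snd))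
      (snd.comp snd)).to₂).of_eq fun a => ?_
  induction f a with
  | zero => simp
  | succ n ih =>
    rw [Finset.range_add_one, Finset.filter_insert]
    by_cases h : p a n <;> simp [h, ih]

end Computable

theorem Filter.eventually_forall_lt {α : Type*} {l : Filter α} {k : ℕ} {p : ℕ → α → Prop}
    (h : ∀ i < k, ∀ᶠ x in l, p i x) : ∀ᶠ x in l, ∀ i < k, p i x :=
  (Set.finite_Iio k).eventually_all.2 h

theorem primrec_decide_haltsFastBelow :
    Primrec fun x : (ℕ × ℕ) × ℕ => decide (HaltsFastBelow x.1.1 x.1.2 x.2) :=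
  (Primrec.nat_lt.comp (Primrec.option_getD.comp (Code.primrec_evaln.comp
    (.pair (.pair (.comp .fst .fst) ((Primrec.ofNat _).comp (.comp .snd .fst))) .snd))
    (.comp .fst .fst)) (.comp .fst .fst)).decide

theorem eventually_haltsFastBelow {w z : ℕ}
    (h : ((Denumerable.ofNat Code w).eval z).Dom) : ∀ᶠ n in atTop, HaltsFastBelow n w z := by
  obtain ⟨s, hs⟩ := Code.evaln_complete.1 (Part.get_mem h)
  filter_upwards [eventually_ge_atTop s, eventually_gt_atTop (Part.get _ h)] with n hsn hn
  rw [HaltsFastBelow, Option.mem_def.1 (Code.evaln_mono hsn hs)]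
  exact hn

section

variable {Pr : ℕ → ℕ → Bool}

open Computable in
theorem computable₂_beesonCondition (hcomp : Computable fun p : ℕ × ℕ => Pr p.1 p.2) :
    Computable₂ fun n k =>
      decide (∀ j < k, ∀ w < k, ∀ z < k, Pr j w = true → HaltsFastBelow n w z) := by
  have hPr : Computable fun (y : (((ℕ × ℕ) × ℕ) × ℕ) × ℕ) => Pr y.1.1.2 y.1.2 :=
    Computable₂.comp hcomp (snd.comp (fst.comp fst)) (snd.comp fst)
  have hHalts : Computable fun (y : (((ℕ × ℕ) × ℕ) × ℕ) × ℕ) =>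
      decide (HaltsFastBelow y.1.1.1.1 y.1.2 y.2) :=
    (primrec_decide_haltsFastBelow.comp
      (.pair (.pair (.comp .fst (.comp .fst (.comp .fst .fst))) (.comp .snd .fst)) .snd)).to_comp
  have hz : Computable₂ fun (x : ((ℕ × ℕ) × ℕ) × ℕ) z =>
      decide (Pr x.1.2 x.2 = true → HaltsFastBelow x.1.1.1 x.2 z) :=
    (cond hPr hHalts (const true)).of_eq fun y => by cases h : Pr y.1.1.2 y.1.2 <;> simp [h]
  have hw : Computable₂ fun (x : (ℕ × ℕ) × ℕ) w =>
      decide (∀ z < x.1.2, Pr x.2 w = true → HaltsFastBelow x.1.1 w z) :=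
    (decide_forall_lt hz (snd.comp (fst.comp fst))).to₂
  have hj : Computable₂ fun (x : ℕ × ℕ) j =>
      decide (∀ w < x.2, ∀ z < x.2, Pr j w = true → HaltsFastBelow x.1 w z) :=
    (decide_forall_lt hw (snd.comp fst)).to₂
  exact (decide_forall_lt hj snd).to₂

theorem le_beesonV {n k : ℕ} (hkn : k < n)
    (hk : ∀ j < k, ∀ w < k, ∀ z < k, Pr j w = true → HaltsFastBelow n w z) :
    k ≤ beesonV Pr n :=
  Finset.le_sup (f := id) (Finset.mem_filter.2 ⟨Finset.mem_range.2 hkn, hk⟩)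

end

/-- If `Pr` is a sound computable proof predicate for totality, then `v` is (total)
computable and its range is unbounded. -/
theorem beesonV_computable_and_unbounded (Pr : ℕ → ℕ → Bool)
    (hcomp : Computable fun p : ℕ × ℕ => Pr p.1 p.2)
    (hsound : ∀ j w, Pr j w = true →
      ∀ z, ((Denumerable.ofNat Nat.Partrec.Code w).eval z).Dom) :
    Computable (beesonV Pr) ∧ ∀ k, ∃ n, k ≤ beesonV Pr n := by
  refine ⟨Computable.finset_sup_filter_range (computable₂_beesonCondition hcomp) .id, fun k => ?_⟩
  have hfast : ∀ᶠ n in atTop, ∀ j < k, ∀ w < k, ∀ z < k, Pr j w = true → HaltsFastBelow n w z :=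
    eventually_forall_lt fun j _ => eventually_forall_lt fun w _ => eventually_forall_lt fun z _ =>
      eventually_imp_distrib_left.2 fun hPr => eventually_haltsFastBelow (hsound j w hPr z)
  obtain ⟨n, hkn, hn⟩ := ((eventually_gt_atTop k).and hfast).exists
  exact ⟨n, le_beesonV hkn hn⟩
end
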